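/- arXiv:2303.11998 — 4 statements merged into one kernel-verified Lean document; each statement's English description precedes it below -/
import Mathlib

section
/- Let ρ₀ : 𝔾 → U(E₀) be a finite-dimensional unitary representation of a monoid 𝔾, let N₀ = dim(ρ₀(ℂ[𝔾])) (the span of the image of ρ₀ in End(E₀)), and let g₁,…,g_{N₀} ∈ 𝔾 be such that ρ₀(g₁),…,ρ₀(g_{N₀}) span ρ₀(ℂ[𝔾]). Then the N₀×N₀ matrix M₀ with entries (M₀)_{ij} = Tr(ρ₀(g_i g_j)) is invertible. -/
/-!
The span `A` of `ρ₀(𝔾)` is a finite-dimensional algebra containing each unitary `ρ₀ g`, hence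
also its inverse `ρ₀(g)*`; so `A` is closed under adjoints. If `M₀ c = 0`, then
`Y = ∑ cⱼ ρ₀(gⱼ) ∈ A` satisfies `Tr (Z Y) = 0` for all `Z ∈ A`, in particular for `Z = Y*`,
so `Y = 0`. As `N₀ = dim A`, the spanning family `ρ₀(gᵢ)` is a basis, whence `c = 0`.
-/

open Submodule

theorem LinearMap.eq_zero_of_trace_adjoint_mul_self_eq_zero {𝕜 E : Type*} [RCLike 𝕜]
    [NormedAddCommGroup E] [InnerProductSpace 𝕜 E] [FiniteDimensional 𝕜 E] {T : E →ₗ[𝕜] E}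
    (h : trace 𝕜 E (adjoint T * T) = 0) : T = 0 := by
  let b := stdOrthonormalBasis 𝕜 E
  have hsum : ∑ i, ‖T (b i)‖ ^ 2 = 0 := by
    have := congrArg RCLike.re h
    simpa [trace_eq_sum_inner _ b, adjoint_inner_right, inner_self_eq_norm_sq] using this
  have hzero : ∀ i, T (b i) = 0 := fun i => by
    simpa using (Finset.sum_eq_zero_iff_of_nonneg fun i _ => by positivity).mp hsum i
      (Finset.mem_univ i)
  exact b.toBasis.ext fun i => by simpa using hzero i

theorem Subalgebra.mem_of_mul_eq_one {K A : Type*} [Field K] [Ring A] [Algebra K A]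
    (S : Subalgebra K A) [FiniteDimensional K S] {a b : A} (ha : a ∈ S) (hba : b * a = 1) :
    b ∈ S := by
  have hinj : Function.Injective (LinearMap.mulLeft K (⟨a, ha⟩ : S)) := fun x y hxy => by
    have := congrArg (b * ·.val) hxy
    simpa [← mul_assoc, hba] using this
  obtain ⟨s, hs⟩ := LinearMap.injective_iff_surjective.mp hinj 1
  have has : a * s = 1 := congrArg Subtype.val hs
  have : b = s := by rw [← mul_one b, ← has, ← mul_assoc, hba, one_mul]
  exact this ▸ s.2

theorem MonoidHom.toSubmodule_adjoin_range {R M A : Type*} [CommSemiring R] [Monoid M]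
    [Semiring A] [Algebra R A] (f : M →* A) :
    Subalgebra.toSubmodule (Algebra.adjoin R (Set.range f)) = span R (Set.range f) := by
  rw [Algebra.adjoin_eq_span, ← MonoidHom.coe_mrange, Submonoid.closure_eq]

theorem isUnit_trace_mul_matrix {𝕜 E ι : Type*} [RCLike 𝕜] [NormedAddCommGroup E]
    [InnerProductSpace 𝕜 E] [FiniteDimensional 𝕜 E] [Fintype ι] [DecidableEq ι]
    {v : ι → E →ₗ[𝕜] E} (hv : LinearIndependent 𝕜 v)
    (hadj : ∀ Y ∈ span 𝕜 (Set.range v), LinearMap.adjoint Y ∈ span 𝕜 (Set.range v)) :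
    IsUnit (Matrix.of fun i j => LinearMap.trace 𝕜 E (v i * v j)) := by
  refine Matrix.mulVec_injective_iff_isUnit.mp <|
    (injective_iff_map_eq_zero (Matrix.mulVecLin _)).mpr fun c hc => ?_
  set Y := ∑ j, c j • v j
  have hY : Y ∈ span 𝕜 (Set.range v) :=
    sum_mem fun j _ => smul_mem _ _ (subset_span ⟨j, rfl⟩)
  have htrace : span 𝕜 (Set.range v) ≤
      LinearMap.ker (LinearMap.trace 𝕜 E ∘ₗ LinearMap.mulRight 𝕜 Y) := by
    rw [span_le]
    rintro _ ⟨i, rfl⟩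
    have := congrFun hc i
    simpa [Matrix.mulVec, dotProduct, Y, Finset.mul_sum, mul_comm] using this
  have hY0 : Y = 0 := LinearMap.eq_zero_of_trace_adjoint_mul_self_eq_zero (htrace (hadj Y hY))
  exact funext (Fintype.linearIndependent_iff.mp hv c hY0)

theorem adjoint_mem_span_range_of_isometry {𝕜 G E : Type*} [RCLike 𝕜] [Monoid G]
    [NormedAddCommGroup E] [InnerProductSpace 𝕜 E] [FiniteDimensional 𝕜 E]
    (ρ : G →* (E →ₗ[𝕜] E)) (hρ : ∀ g, LinearMap.adjoint (ρ g) ∘ₗ ρ g = LinearMap.id)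
    {Y : E →ₗ[𝕜] E} (hY : Y ∈ span 𝕜 (Set.range ρ)) :
    LinearMap.adjoint Y ∈ span 𝕜 (Set.range ρ) := by
  have hgen : Set.range ρ ⊆ (span 𝕜 (Set.range ρ)).comap LinearMap.adjoint.toLinearMap := by
    rintro _ ⟨g, rfl⟩
    rw [SetLike.mem_coe, mem_comap, ← ρ.toSubmodule_adjoin_range]
    exact (Algebra.adjoin 𝕜 _).mem_of_mul_eq_one (Algebra.subset_adjoin ⟨g, rfl⟩) (hρ g)
  exact span_le.mpr hgen hY

/-- For a finite-dimensional unitary representation `ρ₀` of a monoid `𝔾`, if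
`ρ₀ g₁, …, ρ₀ g_{N₀}` span `ρ₀(ℂ[𝔾])` (the span of the image of `ρ₀`), where
`N₀ = dim ρ₀(ℂ[𝔾])`, then the matrix `(Tr (ρ₀ (gᵢ gⱼ)))_{ij}` is invertible. -/
theorem trace_matrix_invertible
    {G E₀ : Type*} [Monoid G]
    [NormedAddCommGroup E₀] [InnerProductSpace ℂ E₀] [FiniteDimensional ℂ E₀]
    (ρ₀ : G →* (E₀ →ₗ[ℂ] E₀))
    (hρ₀ : ∀ g, LinearMap.adjoint (ρ₀ g) ∘ₗ ρ₀ g = LinearMap.id ∧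
      ρ₀ g ∘ₗ LinearMap.adjoint (ρ₀ g) = LinearMap.id)
    (N₀ : ℕ)
    (hN₀ : N₀ = Module.finrank ℂ (Submodule.span ℂ (Set.range fun x : G => ρ₀ x)))
    (g : Fin N₀ → G)
    (hspan : Submodule.span ℂ (Set.range fun i : Fin N₀ => ρ₀ (g i)) =
      Submodule.span ℂ (Set.range fun x : G => ρ₀ x)) :
    IsUnit (Matrix.of fun i j : Fin N₀ => LinearMap.trace ℂ E₀ (ρ₀ (g i * g j))) := by
  have hindep : LinearIndependent ℂ (fun i => ρ₀ (g i)) := by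
    rw [linearIndependent_iff_card_eq_finrank_span, Set.finrank, hspan, Fintype.card_fin, hN₀]
  have hadj : ∀ Y ∈ span ℂ (Set.range fun i => ρ₀ (g i)),
      LinearMap.adjoint Y ∈ span ℂ (Set.range fun i => ρ₀ (g i)) := by
    simpa only [hspan] using fun Y => adjoint_mem_span_range_of_isometry ρ₀ fun x => (hρ₀ x).1
  simpa only [map_mul] using isUnit_trace_mul_matrix hindep hadj
end

section
/- Let E be an n-dimensional complex inner product space and let u ∈ U(E) be unitary. For every integer N > n there exists j ∈ {1, …, Nⁿ} such that ‖uʲ − id‖ ≤ 3π/N in operator norm. -/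
/-!
Cut `[-π, π]` into `N` boxes of width `2π/N`. The spectrum `σ(u)` has at most `n` points, all on
the unit circle, so among the `Nⁿ + 1` tuples `(arg μᵏ)_{μ ∈ σ(u)}`, `0 ≤ k ≤ Nⁿ`, two (say `k < l`)
lie in the same product of boxes; then `|μʲ - 1| = |μˡ - μᵏ| ≤ 2π/N` for `j = l - k` and every
`μ ∈ σ(u)`. As `u` is normal, `‖uʲ - 1‖` is the largest of these numbers.
-/

open Complex Real Set

lemma exists_fin_forall_abs_sub_le_one {N : ℕ} (hN : 0 < N) :
    ∃ f : ℝ → Fin N, ∀ s ∈ Icc (0 : ℝ) N, ∀ t ∈ Icc (0 : ℝ) N, f s = f t → |s - t| ≤ 1 := by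
  -- the last box `[N - 1, N]` is closed, so the endpoint `N` needs no box of its own
  have hbox : ∀ s ∈ Icc (0 : ℝ) N,
      ((min ⌊s⌋₊ (N - 1) : ℕ) : ℝ) ≤ s ∧ s ≤ ((min ⌊s⌋₊ (N - 1) : ℕ) : ℝ) + 1 := by
    rintro s ⟨hs0, hsN⟩
    refine ⟨(Nat.cast_le.mpr (min_le_left _ _)).trans (Nat.floor_le hs0), ?_⟩
    rcases min_cases ⌊s⌋₊ (N - 1) with ⟨h, -⟩ | ⟨h, -⟩
    · rw [h]; exact (Nat.lt_floor_add_one s).le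
    · rw [h, Nat.cast_sub hN, Nat.cast_one, sub_add_cancel]; exact hsN
  refine ⟨fun s ↦ ⟨min ⌊s⌋₊ (N - 1), by omega⟩, fun s hs t ht hst ↦ ?_⟩
  have hst : min ⌊s⌋₊ (N - 1) = min ⌊t⌋₊ (N - 1) := congrArg Fin.val hst
  obtain ⟨hs₁, hs₂⟩ := hbox s hs
  obtain ⟨ht₁, ht₂⟩ := hbox t ht
  rw [hst] at hs₁ hs₂
  rw [abs_sub_le_iff]
  constructor <;> linarith

lemma exists_fin_forall_abs_sub_le (a b : ℝ) {N : ℕ} (hN : 0 < N) :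
    ∃ f : ℝ → Fin N, ∀ x ∈ Icc a b, ∀ y ∈ Icc a b, f x = f y → |x - y| ≤ (b - a) / N := by
  obtain ⟨f, hf⟩ := exists_fin_forall_abs_sub_le_one hN
  set δ := (b - a) / N with hδ_def
  have hN' : (0 : ℝ) < N := Nat.cast_pos.mpr hN
  have hba : b - a = N * δ := by rw [hδ_def]; field_simp
  refine ⟨fun x ↦ f ((x - a) / δ), fun x hx y hy hxy ↦ ?_⟩
  rcases (hx.1.trans hx.2).eq_or_lt with rfl | hab
  · rw [(hx.2.trans hy.1).antisymm (hy.2.trans hx.1), sub_self, abs_zero, hδ_def, sub_self,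
      zero_div]
  have hδ : 0 < δ := div_pos (sub_pos.mpr hab) hN'
  have hscale : ∀ x ∈ Icc a b, (x - a) / δ ∈ Icc (0 : ℝ) N := fun x hx ↦
    ⟨div_nonneg (sub_nonneg.mpr hx.1) hδ.le,
      (div_le_iff₀ hδ).mpr (by rw [← hba]; linarith [hx.2])⟩
  calc |x - y| = |(x - a) / δ - (y - a) / δ| * δ := by
        rw [← sub_div, abs_div, abs_of_pos hδ, div_mul_cancel₀ _ hδ.ne']; ring_nf
    _ ≤ 1 * δ := by gcongr; exact hf _ (hscale x hx) _ (hscale y hy) hxy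
    _ = δ := one_mul δ

lemma Complex.norm_sub_le_abs_arg_sub {z w : ℂ} (hz : ‖z‖ = 1) (hw : ‖w‖ = 1) :
    ‖z - w‖ ≤ |arg z - arg w| := by
  have hexp : ∀ {x : ℂ}, ‖x‖ = 1 → exp (arg x * I) = x := fun {x} hx ↦ by
    simpa [hx] using norm_mul_exp_arg_mul_I x
  have hzw : z - w = w * (exp (I * ↑(arg z - arg w)) - 1) := by
    have hz' : exp (arg w * I) * exp (I * ↑(arg z - arg w)) = z := by
      rw [← exp_add]
      convert hexp hz using 2
      push_cast
      ring
    rw [hexp hw] at hz'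
    rw [mul_sub, mul_one, hz']
  calc ‖z - w‖ = ‖exp (I * ↑(arg z - arg w)) - 1‖ := by rw [hzw, norm_mul, hw, one_mul]
    _ ≤ |arg z - arg w| := norm_exp_I_mul_ofReal_sub_one_le

theorem Complex.exists_forall_norm_pow_sub_one_le {ι : Type*} [Finite ι] (z : ι → ℂ)
    (hz : ∀ i, ‖z i‖ = 1) {N : ℕ} (hN : 0 < N) :
    ∃ j, 1 ≤ j ∧ j ≤ N ^ Nat.card ι ∧ ∀ i, ‖z i ^ j - 1‖ ≤ 2 * π / N := by
  obtain ⟨f, hf⟩ := exists_fin_forall_abs_sub_le (-π) π hN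
  have harg : ∀ x : ℂ, arg x ∈ Icc (-π) π := fun x ↦ ⟨(neg_pi_lt_arg x).le, arg_le_pi x⟩
  classical
  have := Fintype.ofFinite ι
  obtain ⟨k, l, hkl, hF⟩ := Fintype.exists_ne_map_eq_of_card_lt
    (fun k : Fin (N ^ Nat.card ι + 1) ↦ fun i ↦ f (arg (z i ^ (k : ℕ))))
    (by simp [Nat.card_eq_fintype_card])
  wlog hlt : k < l generalizing k l
  · exact this l k hkl.symm hF.symm (lt_of_le_of_ne (not_lt.mp hlt) hkl.symm)
  refine ⟨l - k, by omega, by omega, fun i ↦ ?_⟩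
  have hk : ‖z i ^ (k : ℕ)‖ = 1 := by rw [norm_pow, hz, one_pow]
  calc ‖z i ^ ((l : ℕ) - k) - 1‖ = ‖z i ^ (l : ℕ) - z i ^ (k : ℕ)‖ := by
        rw [← pow_sub_mul_pow (z i) hlt.le, ← sub_one_mul, norm_mul, hk, mul_one]
    _ ≤ |arg (z i ^ (l : ℕ)) - arg (z i ^ (k : ℕ))| :=
        norm_sub_le_abs_arg_sub (by rw [norm_pow, hz, one_pow]) hk
    _ ≤ (π - -π) / N := hf _ (harg _) _ (harg _) (congrFun hF i).symm
    _ = 2 * π / N := by ring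

theorem Module.End.natCard_spectrum_le_finrank {K V : Type*} [Field K] [AddCommGroup V]
    [Module K V] [FiniteDimensional K V] (f : Module.End K V) :
    Nat.card (spectrum K f) ≤ Module.finrank K V := by
  have := f.finite_spectrum.fintype
  choose v hv using fun μ : spectrum K f ↦
    (hasEigenvalue_iff_mem_spectrum.mpr μ.2).exists_hasEigenvector
  rw [Nat.card_eq_fintype_card]
  exact (f.eigenvectors_linearIndependent _ v hv).fintype_card_le_finrank

theorem IsStarNormal.norm_pow_sub_one_le {A : Type*} [CStarAlgebra A] {u : A} [IsStarNormal u]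
    (j : ℕ) {c : ℝ} (hc : 0 ≤ c) (h : ∀ z ∈ spectrum ℂ u, ‖z ^ j - 1‖ ≤ c) :
    ‖u ^ j - 1‖ ≤ c := by
  have hcfc : cfc (fun z : ℂ ↦ z ^ j - 1) u = u ^ j - 1 := by
    rw [cfc_sub (fun z : ℂ ↦ z ^ j) (fun _ ↦ 1) u, cfc_pow_id u j, cfc_const_one ℂ u]
  rw [← hcfc]
  exact norm_cfc_le hc h

/-- Pigeonhole for powers of a unitary operator on an `n`-dimensional complex inner
product space: for every `N > n` there is `1 ≤ j ≤ N^n` with `‖uʲ − id‖ ≤ 3π/N`. -/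
theorem unitary_power_close_to_id
    {E : Type*} [NormedAddCommGroup E] [InnerProductSpace ℂ E] [FiniteDimensional ℂ E]
    (u : E →L[ℂ] E) (hu : u ∈ unitary (E →L[ℂ] E))
    (N : ℕ) (hN : Module.finrank ℂ E < N) :
    ∃ j : ℕ, 1 ≤ j ∧ j ≤ N ^ Module.finrank ℂ E ∧
      ‖u ^ j - 1‖ ≤ 3 * Real.pi / N := by
  have hN₀ : 0 < N := (Nat.zero_le _).trans_lt hN
  have hσ : spectrum ℂ u = spectrum ℂ (u : Module.End ℂ E) := ContinuousLinearMap.spectrum_eq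
  have : Finite (spectrum ℂ u) := hσ ▸ (Module.End.finite_spectrum _).to_subtype
  have hcard : Nat.card (spectrum ℂ u) ≤ Module.finrank ℂ E :=
    hσ ▸ Module.End.natCard_spectrum_le_finrank _
  obtain ⟨j, hj₁, hjN, hj⟩ := exists_forall_norm_pow_sub_one_le (fun z : spectrum ℂ u ↦ (z : ℂ))
    (fun z ↦ spectrum.norm_eq_one_of_unitary hu z.2) hN₀
  refine ⟨j, hj₁, hjN.trans (Nat.pow_le_pow_right hN₀ hcard), ?_⟩
  have := isStarNormal_of_mem_unitary hu
  calc ‖u ^ j - 1‖ ≤ 2 * π / N :=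
        IsStarNormal.norm_pow_sub_one_le j (by positivity) fun z hz ↦ hj ⟨z, hz⟩
    _ ≤ 3 * π / N := by gcongr; linarith [pi_pos]
end

section
/- Let E₀, E be finite-dimensional complex inner product spaces of equal dimension and let Q : E₀ → E be a linear map satisfying ‖Q*Q − id_{E₀}‖ ≤ δ in operator norm, with δ < 1. Then Q is invertible, the unitarisation P⁻¹ := Q(Q*Q)^{-1/2} is a well-defined unitary map E₀ → E, and for every operator B on E and every operator B₀ on E₀ satisfying ‖Q B₀ − B Q‖ ≤ δ and ‖B‖ ≤ 1, ‖B₀‖ ≤ 1, one has ‖P⁻¹ B₀ P − B‖ ≤ Cδ for a constant C depending only on the dimension. -/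
/-!
The square root `S = (Q*Q)^{1/2}` is within `δ` of the identity because `|√t - 1| ≤ |t - 1|` on the
spectrum of `Q*Q`, and `V = Q S⁻¹` satisfies `V*V = S⁻¹ (Q*Q) S⁻¹ = 1`, so it is an isometry, hence
unitary for dimension reasons. Conjugating by `V` turns `V B₀ V⁻¹ - B` into `V B₀ - B V`, and
`V B₀ - B V = (Q B₀ - B Q) S⁻¹ + Q S⁻¹ [B₀, S - 1] S⁻¹`. For `δ ≤ 1/2` both `‖S⁻¹‖` and `‖Q‖`
are at most `2`, which gives the bound `18 δ`; for `δ > 1/2` the trivial bound `2` suffices.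
-/

open ContinuousLinearMap

lemma Real.abs_sqrt_sub_one_le {t : ℝ} (ht : 0 ≤ t) : |√t - 1| ≤ |t - 1| := by
  have h : t - 1 = (√t - 1) * (√t + 1) := by
    linear_combination -(Real.mul_self_sqrt ht)
  rw [h, abs_mul]
  exact le_mul_of_one_le_right (abs_nonneg _)
    (by rw [abs_of_nonneg (by positivity)]; linarith [Real.sqrt_nonneg t])

lemma spectrum.norm_sub_le_norm_sub_algebraMap {𝕜 A : Type*} [NormedField 𝕜] [NormedRing A]
    [NormedAlgebra 𝕜 A] [CompleteSpace A] [NormOneClass A] {a : A} {k : 𝕜}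
    (hk : k ∈ spectrum 𝕜 a) (c : 𝕜) : ‖k - c‖ ≤ ‖a - algebraMap 𝕜 A c‖ :=
  spectrum.norm_le_norm_of_mem <| spectrum.sub_singleton_eq a c ▸ Set.sub_mem_sub hk rfl

lemma Units.norm_inv_mul_one_sub_le {R : Type*} [NormedRing R] (u : Rˣ) :
    ‖(↑u⁻¹ : R)‖ * (1 - ‖(u : R) - 1‖) ≤ ‖(1 : R)‖ := by
  have h : (↑u⁻¹ : R) = 1 - ↑u⁻¹ * (u - 1) := by
    rw [mul_sub, Units.inv_mul, mul_one, sub_sub_cancel]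
  have hle := norm_sub_le (1 : R) (↑u⁻¹ * (u - 1))
  rw [← h] at hle
  nlinarith [norm_mul_le (↑u⁻¹ : R) ((u : R) - 1)]

lemma CFC.norm_sqrt_sub_one_le {A : Type*} [CStarAlgebra A] [PartialOrder A] [StarOrderedRing A]
    {a : A} (ha : 0 ≤ a) : ‖CFC.sqrt a - 1‖ ≤ ‖a - 1‖ := by
  nontriviality A
  have hsqrt : CFC.sqrt a - 1 = cfc (fun t : ℝ ↦ √t - 1) a := by
    rw [CFC.sqrt_eq_real_sqrt a ha, cfcₙ_eq_cfc, cfc_sub .., cfc_const_one ℝ a]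
  rw [hsqrt]
  refine norm_cfc_le (norm_nonneg _) fun t ht ↦ ?_
  calc ‖√t - 1‖ ≤ ‖t - 1‖ := Real.abs_sqrt_sub_one_le (spectrum_nonneg_of_nonneg ha ht)
    _ ≤ ‖a - 1‖ := by
      simpa using spectrum.norm_sub_le_norm_sub_algebraMap ht 1

section Intertwining

variable {𝕜 E₀ E : Type*} [NontriviallyNormedField 𝕜] [NormedAddCommGroup E₀] [NormedSpace 𝕜 E₀]
  [NormedAddCommGroup E] [NormedSpace 𝕜 E]

lemma norm_comp_inv_comp_sub_le (Q : E₀ →L[𝕜] E) (S : (E₀ →L[𝕜] E₀)ˣ) (B₀ : E₀ →L[𝕜] E₀)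
    (B : E →L[𝕜] E) :
    ‖(Q ∘L ↑S⁻¹) ∘L B₀ - B ∘L (Q ∘L ↑S⁻¹)‖ ≤
      ‖Q ∘L B₀ - B ∘L Q‖ * ‖(↑S⁻¹ : E₀ →L[𝕜] E₀)‖ +
        2 * ‖Q‖ * ‖(↑S⁻¹ : E₀ →L[𝕜] E₀)‖ ^ 2 * ‖B₀‖ * ‖(S : E₀ →L[𝕜] E₀) - 1‖ := by
  set W : E₀ →L[𝕜] E₀ := ↑S⁻¹
  set T : E₀ →L[𝕜] E₀ := ↑S
  have hWT : ∀ x, W (T x) = x := fun x ↦ congr($(S.inv_mul) x)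
  have hTW : ∀ x, T (W x) = x := fun x ↦ congr($(S.mul_inv) x)
  have key : (Q ∘L W) ∘L B₀ - B ∘L (Q ∘L W) =
      (Q ∘L B₀ - B ∘L Q) ∘L W + Q ∘L (W * (B₀ * (T - 1) - (T - 1) * B₀) * W) := by
    ext x
    simp only [sub_apply, add_apply, comp_apply, mul_apply_eq_comp, one_apply_eq_self, map_sub,
      hWT, hTW]
    abel
  have hcomm : ‖B₀ * (T - 1) - (T - 1) * B₀‖ ≤ 2 * ‖B₀‖ * ‖T - 1‖ := by
    have h₁ := norm_mul_le B₀ (T - 1)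
    have h₂ := norm_mul_le (T - 1) B₀
    linarith [norm_sub_le (B₀ * (T - 1)) ((T - 1) * B₀)]
  rw [key]
  calc _ ≤ ‖Q ∘L B₀ - B ∘L Q‖ * ‖W‖ + ‖Q‖ * (‖W‖ * ‖B₀ * (T - 1) - (T - 1) * B₀‖ * ‖W‖) := by
        refine (norm_add_le _ _).trans (add_le_add (opNorm_comp_le _ _) ?_)
        refine (opNorm_comp_le _ _).trans (mul_le_mul_of_nonneg_left ?_ (norm_nonneg _))
        exact (norm_mul_le _ _).trans (mul_le_mul_of_nonneg_right (norm_mul_le _ _) (norm_nonneg _))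
    _ ≤ _ := by
        have hQW := mul_le_mul_of_nonneg_left hcomm (mul_nonneg (norm_nonneg Q) (sq_nonneg ‖W‖))
        nlinarith

lemma LinearIsometryEquiv.norm_conj_sub_eq (V : E₀ ≃ₗᵢ[𝕜] E) (B₀ : E₀ →L[𝕜] E₀)
    (B : E →L[𝕜] E) :
    ‖(V : E₀ →L[𝕜] E) ∘L B₀ ∘L (V.symm : E →L[𝕜] E₀) - B‖ =
      ‖(V : E₀ →L[𝕜] E) ∘L B₀ - B ∘L (V : E₀ →L[𝕜] E)‖ := by
  have h : (V : E₀ →L[𝕜] E) ∘L B₀ ∘L (V.symm : E →L[𝕜] E₀) - B =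
      ((V : E₀ →L[𝕜] E) ∘L B₀ - B ∘L (V : E₀ →L[𝕜] E)) ∘L (V.symm : E →L[𝕜] E₀) := by
    ext x; simp
  rw [h, opNorm_comp_linearIsometryEquiv]

lemma LinearIsometryEquiv.norm_comp_sub_comp_le (V : E₀ ≃ₗᵢ[𝕜] E) (B₀ : E₀ →L[𝕜] E₀)
    (B : E →L[𝕜] E) :
    ‖(V : E₀ →L[𝕜] E) ∘L B₀ - B ∘L (V : E₀ →L[𝕜] E)‖ ≤ ‖B₀‖ + ‖B‖ := by
  simpa using norm_sub_le ((V : E₀ →L[𝕜] E) ∘L B₀) (B ∘L (V : E₀ →L[𝕜] E))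

end Intertwining

section InnerProductSpace

variable {𝕜 E₀ E : Type*} [RCLike 𝕜] [NormedAddCommGroup E₀] [InnerProductSpace 𝕜 E₀]
  [CompleteSpace E₀] [NormedAddCommGroup E] [InnerProductSpace 𝕜 E] [CompleteSpace E]

lemma ContinuousLinearMap.norm_sq_le_one_add_norm_adjoint_comp_self_sub_one (Q : E₀ →L[𝕜] E) :
    ‖Q‖ ^ 2 ≤ 1 + ‖adjoint Q ∘L Q - 1‖ := by
  rw [sq, ← norm_adjoint_comp_self]
  calc ‖adjoint Q ∘L Q‖ ≤ ‖(1 : E₀ →L[𝕜] E₀)‖ + ‖adjoint Q ∘L Q - 1‖ := norm_le_insert' _ _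
    _ ≤ _ := by gcongr; exact norm_id_le

lemma norm_comp_inv_apply_of_mul_self_eq_adjoint_comp_self (Q : E₀ →L[𝕜] E)
    (S : (E₀ →L[𝕜] E₀)ˣ) (hS : IsSelfAdjoint (S : E₀ →L[𝕜] E₀))
    (hSQ : (S : E₀ →L[𝕜] E₀) * S = adjoint Q ∘L Q) (x : E₀) :
    ‖(Q ∘L ↑S⁻¹) x‖ = ‖x‖ := by
  have hW : adjoint (↑S⁻¹ : E₀ →L[𝕜] E₀) = ↑S⁻¹ := by
    rw [← star_eq_adjoint, ← Units.coe_star_inv, show star S = S from Units.ext hS.star_eq]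
  refine (norm_map_iff_adjoint_comp_self _).2 ?_ x
  rw [adjoint_comp, hW]
  change (↑S⁻¹ * (adjoint Q ∘L Q) * ↑S⁻¹ : E₀ →L[𝕜] E₀) = 1
  rw [← hSQ, ← mul_assoc, Units.inv_mul, one_mul, Units.mul_inv]

lemma exists_linearIsometryEquiv_eq_comp_inv [FiniteDimensional 𝕜 E₀] [FiniteDimensional 𝕜 E]
    (h : Module.finrank 𝕜 E₀ = Module.finrank 𝕜 E) (Q : E₀ →L[𝕜] E) (S : (E₀ →L[𝕜] E₀)ˣ)
    (hS : IsSelfAdjoint (S : E₀ →L[𝕜] E₀)) (hSQ : (S : E₀ →L[𝕜] E₀) * S = adjoint Q ∘L Q) :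
    ∃ V : E₀ ≃ₗᵢ[𝕜] E, (V : E₀ →L[𝕜] E) = Q ∘L ↑S⁻¹ :=
  ⟨LinearIsometry.toLinearIsometryEquiv
    ⟨(Q ∘L ↑S⁻¹ : E₀ →L[𝕜] E), norm_comp_inv_apply_of_mul_self_eq_adjoint_comp_self Q S hS hSQ⟩ h,
    rfl⟩

end InnerProductSpace

/-- Unitarisation of an approximate unitary: if `‖Q*Q − id‖ ≤ δ < 1` then `Q` is
invertible, the positive square root `S = (Q*Q)^{1/2}` exists and is invertible, the
unitarisation `P⁻¹ = Q S⁻¹` (equivalently `P⁻¹ S = Q`) is a well-defined unitary map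
`E₀ → E`, and conjugation by `P` approximately intertwines operators that `Q`
approximately intertwines, with a constant depending only on the dimension. -/
theorem unitarisation_of_approximate_unitary (n : ℕ) :
    ∃ C > 0, ∀ (E₀ E : Type)
      [NormedAddCommGroup E₀] [InnerProductSpace ℂ E₀] [FiniteDimensional ℂ E₀]
      [NormedAddCommGroup E] [InnerProductSpace ℂ E] [FiniteDimensional ℂ E],
      Module.finrank ℂ E₀ = n → Module.finrank ℂ E = n →
      ∀ (Q : E₀ →L[ℂ] E) (δ : ℝ), δ < 1 →
      ‖ContinuousLinearMap.adjoint Q ∘L Q - 1‖ ≤ δ →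
      Function.Bijective Q ∧
      ∃ S : E₀ →L[ℂ] E₀, IsSelfAdjoint S ∧ (∀ x : E₀, 0 ≤ ((inner ℂ x (S x) : ℂ)).re) ∧
        S ∘L S = ContinuousLinearMap.adjoint Q ∘L Q ∧ IsUnit S ∧
        ∃ P : E ≃ₗᵢ[ℂ] E₀,
          P.symm.toContinuousLinearEquiv.toContinuousLinearMap ∘L S = Q ∧
          ∀ (B : E →L[ℂ] E) (B₀ : E₀ →L[ℂ] E₀),
            ‖Q ∘L B₀ - B ∘L Q‖ ≤ δ → ‖B‖ ≤ 1 → ‖B₀‖ ≤ 1 →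
            ‖P.symm.toContinuousLinearEquiv.toContinuousLinearMap ∘L B₀ ∘L
                P.toContinuousLinearEquiv.toContinuousLinearMap - B‖ ≤ C * δ := by
  refine ⟨18, by norm_num, fun E₀ E _ _ _ _ _ _ hE₀ hE Q δ hδ hQ ↦ ?_⟩
  set a := adjoint Q ∘L Q
  have ha : 0 ≤ a := (nonneg_iff_isPositive a).2 (isPositive_adjoint_comp_self Q)
  have haU : IsUnit a := by
    simpa using isUnit_one_sub_of_norm_lt_one (x := 1 - a) (by rw [norm_sub_rev]; linarith)
  obtain ⟨S, hS⟩ := (CFC.isUnit_sqrt_iff a).2 haU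
  have hSa : ‖(S : E₀ →L[ℂ] E₀) - 1‖ ≤ δ := hS ▸ (CFC.norm_sqrt_sub_one_le ha).trans hQ
  have hSpos : 0 ≤ (S : E₀ →L[ℂ] E₀) := hS ▸ CFC.sqrt_nonneg a
  have hSS : (S : E₀ →L[ℂ] E₀) * S = a := hS ▸ CFC.sqrt_mul_sqrt_self a ha
  obtain ⟨V, hV⟩ := exists_linearIsometryEquiv_eq_comp_inv (hE₀.trans hE.symm) Q S
    hSpos.isSelfAdjoint hSS
  have hVS : (V : E₀ →L[ℂ] E) ∘L S = Q := by
    rw [hV, comp_assoc, ← mul_def, Units.inv_mul, one_def, comp_id]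
  refine ⟨hVS ▸ V.bijective.comp (ContinuousLinearEquiv.ofUnit S).bijective, S,
    hSpos.isSelfAdjoint, ((nonneg_iff_isPositive _).1 hSpos).re_inner_nonneg_right, hSS,
    S.isUnit, V.symm, hVS, fun B B₀ hBQ hB hB₀ ↦ ?_⟩
  change ‖(V : E₀ →L[ℂ] E) ∘L B₀ ∘L (V.symm : E →L[ℂ] E₀) - B‖ ≤ 18 * δ
  rw [V.norm_conj_sub_eq]
  rcases le_or_gt δ (1 / 2) with hδ' | hδ'
  · have hW : ‖(↑S⁻¹ : E₀ →L[ℂ] E₀)‖ ≤ 2 := by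
      have hinv := S.norm_inv_mul_one_sub_le
      have hone : ‖(1 : E₀ →L[ℂ] E₀)‖ ≤ 1 := norm_id_le
      nlinarith [norm_nonneg (↑S⁻¹ : E₀ →L[ℂ] E₀)]
    have hQ2 : ‖Q‖ ≤ 2 := by
      nlinarith [Q.norm_sq_le_one_add_norm_adjoint_comp_self_sub_one, norm_nonneg Q]
    rw [hV]
    calc _ ≤ _ := norm_comp_inv_comp_sub_le Q S B₀ B
      _ ≤ δ * 2 + 2 * 2 * 2 ^ 2 * 1 * δ := by gcongr; exact (norm_nonneg _).trans hQ
      _ = 18 * δ := by ring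
  · linarith [V.norm_comp_sub_comp_le B₀ B]
end

section
/- Let E be a finite-dimensional complex inner product space and let R be a positive self-adjoint operator with ‖R − id‖ ≤ 1/4. Suppose p̃ is an operator with R² = p̃*p̃, ‖p̃‖ ≤ 2, and suppose a derivation D (linear map satisfying Leibniz on products and D(T*) = (DT)* ) satisfies ‖Dp̃‖ ≤ ε. Then from differentiating R² = p̃* p̃: 2 DR = (Dp̃)* p̃ + p̃* (Dp̃) − (R − id)(DR) − (DR)(R − id), and consequently ‖DR‖ ≤ 4ε. -/
/-!
Differentiating `R * R = p̃† p̃` with the Leibniz rule gives `DR R + R DR = (Dp̃)† p̃ + p̃† Dp̃`.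
Writing `R = 1 + (R - 1)` on the left turns this into the stated identity for `2 DR`, and since
`R - 1` has norm at most `1/4`, the correction terms cost at most half of `‖DR‖`, which is
absorbed into the left-hand side: `‖DR‖ ≤ (2/3) ‖DR R + R DR‖ ≤ (2/3) · 2 ‖p̃‖ ‖Dp̃‖ ≤ 4ε`.
-/

open ContinuousLinearMap

theorem two_smul_eq_mul_add_mul_sub {𝕜 A : Type*} [Semiring 𝕜] [Ring A] [Module 𝕜 A]
    (x r : A) : (2 : 𝕜) • x = x * r + r * x - (r - 1) * x - x * (r - 1) := by
  rw [two_smul]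
  noncomm_ring

theorem norm_le_of_norm_sub_one_le {𝕜 A : Type*} [RCLike 𝕜] [NormedRing A] [NormedSpace 𝕜 A]
    {x r : A} (hr : ‖r - 1‖ ≤ 1 / 4) : ‖x‖ ≤ 2 / 3 * ‖x * r + r * x‖ := by
  have hleft : ‖(r - 1) * x‖ ≤ 1 / 4 * ‖x‖ :=
    (norm_mul_le _ _).trans (mul_le_mul_of_nonneg_right hr (norm_nonneg _))
  have hright : ‖x * (r - 1)‖ ≤ ‖x‖ * (1 / 4) :=
    (norm_mul_le _ _).trans (mul_le_mul_of_nonneg_left hr (norm_nonneg _))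
  have htwo : 2 * ‖x‖ ≤ ‖x * r + r * x‖ + ‖(r - 1) * x‖ + ‖x * (r - 1)‖ :=
    calc 2 * ‖x‖ = ‖(2 : 𝕜) • x‖ := by rw [norm_smul, RCLike.norm_two]
      _ = ‖x * r + r * x - (r - 1) * x - x * (r - 1)‖ := by
          rw [two_smul_eq_mul_add_mul_sub]
      _ ≤ _ := norm_sub_le_of_le (norm_sub_le _ _) le_rfl
  linarith

theorem norm_star_mul_add_star_mul_le {A : Type*} [NormedRing A] [StarRing A] [NormedStarGroup A]
    (a b : A) : ‖star a * b + star b * a‖ ≤ 2 * ‖a‖ * ‖b‖ :=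
  calc ‖star a * b + star b * a‖ ≤ ‖star a‖ * ‖b‖ + ‖star b‖ * ‖a‖ :=
        norm_add_le_of_le (norm_mul_le _ _) (norm_mul_le _ _)
    _ = 2 * ‖a‖ * ‖b‖ := by rw [norm_star, norm_star]; ring

theorem derivative_of_positive_part_bound_general
    {E : Type*} [NormedAddCommGroup E] [InnerProductSpace ℂ E] [FiniteDimensional ℂ E]
    (R ptilde : E →L[ℂ] E)
    (hR : ‖R - 1‖ ≤ 1 / 4)
    (hsq : R * R = ContinuousLinearMap.adjoint ptilde * ptilde)
    (hpt : ‖ptilde‖ ≤ 2)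
    (D : (E →L[ℂ] E) →ₗ[ℂ] (E →L[ℂ] E))
    (hLeib : ∀ S T : E →L[ℂ] E, D (S * T) = D S * T + S * D T)
    (hstar : ∀ T : E →L[ℂ] E, D (ContinuousLinearMap.adjoint T) =
      ContinuousLinearMap.adjoint (D T))
    (ε : ℝ) (hε : ‖D ptilde‖ ≤ ε) :
    (2 : ℂ) • D R = ContinuousLinearMap.adjoint (D ptilde) * ptilde +
        ContinuousLinearMap.adjoint ptilde * D ptilde
        - (R - 1) * D R - D R * (R - 1) ∧
      ‖D R‖ ≤ 4 * ε := by
  have hderiv : D R * R + R * D R = adjoint (D ptilde) * ptilde + adjoint ptilde * D ptilde := by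
    simpa only [hLeib, hstar] using congrArg D hsq
  refine ⟨by rw [← hderiv, two_smul_eq_mul_add_mul_sub], ?_⟩
  have hsum : ‖adjoint (D ptilde) * ptilde + adjoint ptilde * D ptilde‖ ≤
      2 * ‖D ptilde‖ * ‖ptilde‖ := by
    simpa only [star_eq_adjoint] using norm_star_mul_add_star_mul_le (D ptilde) ptilde
  calc ‖D R‖ ≤ 2 / 3 * ‖D R * R + R * D R‖ := norm_le_of_norm_sub_one_le (𝕜 := ℂ) hR
    _ ≤ 2 / 3 * (2 * ‖D ptilde‖ * ‖ptilde‖) := by rw [hderiv]; gcongr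
    _ ≤ 4 * ε := by nlinarith [norm_nonneg (D ptilde), norm_nonneg ptilde]

/-- Differentiating `R² = p̃* p̃` for a positive self-adjoint `R` with `‖R − id‖ ≤ 1/4`
and `‖p̃‖ ≤ 2`, with a derivation `D` (Leibniz, commuting with adjoints) satisfying
`‖D p̃‖ ≤ ε`: one gets
`2 DR = (D p̃)* p̃ + p̃* (D p̃) − (R − id)(DR) − (DR)(R − id)` and `‖DR‖ ≤ 4ε`. -/
theorem derivative_of_positive_part_bound
    {E : Type*} [NormedAddCommGroup E] [InnerProductSpace ℂ E] [FiniteDimensional ℂ E]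
    (R ptilde : E →L[ℂ] E)
    (hRsa : IsSelfAdjoint R) (hRpos : ∀ x : E, 0 ≤ ((inner ℂ x (R x) : ℂ)).re)
    (hR : ‖R - 1‖ ≤ 1 / 4)
    (hsq : R * R = ContinuousLinearMap.adjoint ptilde * ptilde)
    (hpt : ‖ptilde‖ ≤ 2)
    (D : (E →L[ℂ] E) →ₗ[ℂ] (E →L[ℂ] E))
    (hLeib : ∀ S T : E →L[ℂ] E, D (S * T) = D S * T + S * D T)
    (hstar : ∀ T : E →L[ℂ] E, D (ContinuousLinearMap.adjoint T) =
      ContinuousLinearMap.adjoint (D T))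
    (ε : ℝ) (hε : ‖D ptilde‖ ≤ ε) :
    (2 : ℂ) • D R = ContinuousLinearMap.adjoint (D ptilde) * ptilde +
        ContinuousLinearMap.adjoint ptilde * D ptilde
        - (R - 1) * D R - D R * (R - 1) ∧
      ‖D R‖ ≤ 4 * ε :=
  derivative_of_positive_part_bound_general R ptilde hR hsq hpt D hLeib hstar ε hε
end
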